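/- (Case 2) Let g^{(1)},…,g^{(n)} ∈ ℝ^D be arbitrary per-sample gradients with average ḡ = (1/n)Σ_{i=1}^n g^{(i)}, let H̄^diag ∈ ℝ^{D×D} be any diagonal matrix, and let ỹ ∈ ℝ^D. For every X ∈ ℝ^{D×n} with all rows non-constant and row-wise standardization Y(X) with columns y^{(i)}, the Fréchet derivatives with respect to X of both X ↦ Σ_{i=1}^n (y^{(i)} − ỹ)ᵀ ḡ and X ↦ (1/2)Σ_{i=1}^n (y^{(i)}−ỹ)ᵀ H̄^diag (y^{(i)}−ỹ) are zero; i.e., the average gradient and the diagonal of the average Hessian over the mini-batch cannot pass their influence through the batch-normalization standardization phase. -/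

import Mathlib

/-!
Every row of the standardization has mean `0`, and mean square `1` once the row of `X` is
non-constant. The first loss only sees the row sums of `Y`, so it is constant in `X`. Because
`H̄^diag` is diagonal, the second loss only sees the row sums of `(y_d - ỹ_d)²`, which those two
moments fix; it is therefore constant on the open set of matrices with non-constant rows.
-/

open scoped BigOperators

/-- Mini-batch mean of a feature dimension across `n` samples. -/
noncomputable def bmean {n : ℕ} (x : Fin n → ℝ) : ℝ := (∑ i, x i) / n

/-- Mini-batch standard deviation of a feature dimension across `n` samples. -/
noncomputable def bstd {n : ℕ} (x : Fin n → ℝ) : ℝ :=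
  Real.sqrt ((∑ i, (x i - bmean x) ^ 2) / n)

/-- `x` is non-constant: it differs from the constant vector of its mean. -/
def NonConstant {n : ℕ} (x : Fin n → ℝ) : Prop := x ≠ fun _ => bmean x

/-- The batch-normalization standardization phase (with ε = 0). -/
noncomputable def standardize {n : ℕ} (x : Fin n → ℝ) : Fin n → ℝ :=
  fun i => (x i - bmean x) / bstd x

theorem Matrix.IsDiag.sum_mul_mul_eq {ι R : Type*} [Fintype ι] [DecidableEq ι] [CommSemiring R]
    {A : Matrix ι ι R} (hA : A.IsDiag) (v w : ι → R) :
    ∑ j, ∑ k, v j * A j k * w k = ∑ j, A j j * (v j * w j) := by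
  refine Finset.sum_congr rfl fun j _ => ?_
  rw [Finset.sum_eq_single_of_mem j (Finset.mem_univ j)
    fun k _ hkj => by rw [hA hkj.symm, mul_zero, zero_mul]]
  ring

section Standardize

variable {n : ℕ}

theorem sum_sub_bmean (x : Fin n → ℝ) : ∑ i, (x i - bmean x) = 0 := by
  rcases Nat.eq_zero_or_pos n with rfl | hn
  · simp
  · have : (n : ℝ) ≠ 0 := Nat.cast_ne_zero.mpr hn.ne'
    rw [Finset.sum_sub_distrib, Finset.sum_const, Finset.card_fin, nsmul_eq_mul, bmean,
      mul_div_cancel₀ _ this, sub_self]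

theorem sum_standardize (x : Fin n → ℝ) : ∑ i, standardize x i = 0 := by
  unfold standardize
  rw [← Finset.sum_div, sum_sub_bmean, zero_div]

theorem isOpen_setOf_nonConstant : IsOpen {x : Fin n → ℝ | NonConstant x} := by
  have hmean : Continuous (bmean : (Fin n → ℝ) → ℝ) :=
    (continuous_finsetSum _ fun i _ => continuous_apply i).div_const _
  exact isOpen_ne_fun continuous_id (continuous_pi fun _ => hmean)

namespace NonConstant

variable {x : Fin n → ℝ}

theorem sum_sq_sub_bmean_pos (h : NonConstant x) : 0 < ∑ i, (x i - bmean x) ^ 2 := by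
  obtain ⟨i, hi⟩ := Function.ne_iff.mp h
  have : x i - bmean x ≠ 0 := sub_ne_zero.mpr hi
  exact Finset.sum_pos' (fun j _ => sq_nonneg _) ⟨i, Finset.mem_univ i, by positivity⟩

theorem pos (h : NonConstant x) : 0 < n := by
  obtain ⟨i, -⟩ := Function.ne_iff.mp h
  exact i.pos

theorem sum_standardize_sq (h : NonConstant x) : ∑ i, standardize x i ^ 2 = n := by
  have hn : (0 : ℝ) < n := Nat.cast_pos.mpr h.pos
  have hS := h.sum_sq_sub_bmean_pos
  have hvar : bstd x ^ 2 = (∑ i, (x i - bmean x) ^ 2) / n :=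
    Real.sq_sqrt (div_nonneg hS.le hn.le)
  simp only [standardize, div_pow]
  rw [← Finset.sum_div, hvar]
  field_simp

theorem sum_standardize_sub_sq (h : NonConstant x) (t : ℝ) :
    ∑ i, (standardize x i - t) ^ 2 = n * (1 + t ^ 2) := by
  have expand : ∀ i,
      (standardize x i - t) ^ 2 = standardize x i ^ 2 - 2 * t * standardize x i + t ^ 2 :=
    fun i => by ring
  simp only [expand]
  rw [Finset.sum_add_distrib, Finset.sum_sub_distrib, ← Finset.mul_sum, sum_standardize,
    h.sum_standardize_sq, Finset.sum_const, Finset.card_fin, nsmul_eq_mul]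
  ring

end NonConstant

end Standardize

section Losses

variable {D n : ℕ}

theorem sum_standardize_sub_mul_eq (ytil c : Fin D → ℝ) (Z : Fin D → Fin n → ℝ) :
    ∑ i, ∑ e, (standardize (Z e) i - ytil e) * c e = -n * ∑ e, ytil e * c e := by
  rw [Finset.sum_comm, Finset.mul_sum]
  refine Finset.sum_congr rfl fun e _ => ?_
  rw [← Finset.sum_mul, Finset.sum_sub_distrib, sum_standardize, Finset.sum_const,
    Finset.card_fin, nsmul_eq_mul]
  ring

theorem Matrix.IsDiag.sum_standardize_sub_quadratic_eq {H : Matrix (Fin D) (Fin D) ℝ}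
    (hH : H.IsDiag) (ytil : Fin D → ℝ) {Z : Fin D → Fin n → ℝ}
    (hZ : ∀ d, NonConstant (Z d)) :
    ∑ i, ∑ j, ∑ k, (standardize (Z j) i - ytil j) * H j k * (standardize (Z k) i - ytil k) =
      ∑ j, H j j * (n * (1 + ytil j ^ 2)) := by
  simp only [hH.sum_mul_mul_eq, ← sq]
  rw [Finset.sum_comm]
  refine Finset.sum_congr rfl fun j _ => ?_
  rw [← Finset.mul_sum, (hZ j).sum_standardize_sub_sq]

theorem isOpen_setOf_forall_nonConstant :
    IsOpen {Z : Fin D → Fin n → ℝ | ∀ d, NonConstant (Z d)} := by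
  simp only [Set.ofPred_forall]
  exact isOpen_iInter_of_finite fun d =>
    isOpen_setOf_nonConstant.preimage (continuous_apply (A := fun _ : Fin D => Fin n → ℝ) d)

end Losses

theorem case2_average_blindness_general (D n : ℕ)
    (g : Fin n → Fin D → ℝ) (Hbardiag : Matrix (Fin D) (Fin D) ℝ)
    (hHbardiag : Hbardiag.IsDiag) (ytil : Fin D → ℝ) :
    ∀ X : Fin D → Fin n → ℝ, (∀ d, NonConstant (X d)) →
      HasFDerivAt
        (fun Z : Fin D → Fin n → ℝ =>
          ∑ i, ∑ e, (standardize (Z e) i - ytil e) * ((∑ k, g k e) / n))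
        (0 : (Fin D → Fin n → ℝ) →L[ℝ] ℝ) X ∧
      HasFDerivAt
        (fun Z : Fin D → Fin n → ℝ =>
          (1 / 2 : ℝ) * ∑ i, ∑ j, ∑ k,
            (standardize (Z j) i - ytil j) * Hbardiag j k * (standardize (Z k) i - ytil k))
        (0 : (Fin D → Fin n → ℝ) →L[ℝ] ℝ) X := by
  intro X hX
  refine ⟨?_, ?_⟩
  · simp only [sum_standardize_sub_mul_eq]
    exact hasFDerivAt_const _ X
  · refine (hasFDerivAt_const ((1 / 2 : ℝ) * ∑ j, Hbardiag j j * (n * (1 + ytil j ^ 2))) X)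
      |>.congr_of_eventuallyEq ?_
    filter_upwards [isOpen_setOf_forall_nonConstant.mem_nhds hX] with Z hZ
    rw [hHbardiag.sum_standardize_sub_quadratic_eq ytil hZ]

/-- Case 2: for per-sample gradients `g⁽ⁱ⁾` with average
`ḡ = (1/n)Σᵢ g⁽ⁱ⁾` and any diagonal matrix `H̄^diag`, at every `X` with all rows
non-constant both `X ↦ Σᵢ (y⁽ⁱ⁾ − ỹ)ᵀ ḡ` and
`X ↦ (1/2)Σᵢ (y⁽ⁱ⁾ − ỹ)ᵀ H̄^diag (y⁽ⁱ⁾ − ỹ)` have vanishing Fréchet derivative. -/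
theorem case2_average_blindness (D n : ℕ) (hD : 1 ≤ D) (hn : 2 ≤ n)
    (g : Fin n → Fin D → ℝ) (Hbardiag : Matrix (Fin D) (Fin D) ℝ)
    (hHbardiag : Hbardiag.IsDiag) (ytil : Fin D → ℝ) :
    ∀ X : Fin D → Fin n → ℝ, (∀ d, NonConstant (X d)) →
      HasFDerivAt
        (fun Z : Fin D → Fin n → ℝ =>
          ∑ i, ∑ e, (standardize (Z e) i - ytil e) * ((∑ k, g k e) / n))
        (0 : (Fin D → Fin n → ℝ) →L[ℝ] ℝ) X ∧
      HasFDerivAt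
        (fun Z : Fin D → Fin n → ℝ =>
          (1 / 2 : ℝ) * ∑ i, ∑ j, ∑ k,
            (standardize (Z j) i - ytil j) * Hbardiag j k * (standardize (Z k) i - ytil k))
        (0 : (Fin D → Fin n → ℝ) →L[ℝ] ℝ) X :=
  case2_average_blindness_general D n g Hbardiag hHbardiag ytil
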